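/- Let h(φ) = ∫₀^∞ [(φ²/2 + ω + 1)/(((log(φ²/2 + ω))² + π²)(φ²/2 + ω)^{3/2})] e^{−ω} dω. Then h(φ) ≍ 1/(|φ| (log|φ|)²), i.e., there exist positive constants c, C and M such that for |φ| > M, c ≤ |φ|(log|φ|)² h(φ) ≤ C. -/

import Mathlib

open Real MeasureTheory Filter

/-- Up to a constant, the HTHS marginal prior density of φ. -/
noncomputable def hthsPhiKernel (φ : ℝ) : ℝ :=
  ∫ ω in Set.Ioi (0:ℝ),
    ((φ^2 / 2 + ω + 1) / (((Real.log (φ^2 / 2 + ω))^2 + π^2) * (φ^2 / 2 + ω) ^ ((3:ℝ)/2)))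
      * Real.exp (-ω)

lemma hths_abs (φ : ℝ) : hthsPhiKernel φ = hthsPhiKernel |φ| := by
  simp [hthsPhiKernel, sq_abs]

lemma log_gt_four {t : ℝ} (ht : 60 < t) : 4 < Real.log t := by
  rw [Real.lt_log_iff_exp_lt (by linarith)]
  have h4 : Real.exp 4 = (Real.exp 1) ^ (4:ℕ) := by
    rw [← Real.exp_nat_mul]; norm_num
  have h := Real.exp_one_lt_d9
  have hp := Real.exp_pos 1
  have h2 : (Real.exp 1)^2 < 7.39 := by nlinarith
  have h4' : (Real.exp 1)^(4:ℕ) = ((Real.exp 1)^2)^2 := by ring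
  nlinarith [sq_nonneg (Real.exp 1)]

lemma kernel_bounds {t : ℝ} (ht : 60 < t) :
    Real.exp (-1) / 5 / (t * (Real.log t)^2) ≤ hthsPhiKernel t ∧
    hthsPhiKernel t ≤ 3 / (t * (Real.log t)^2) := by
  have ht0 : (0:ℝ) < t := by linarith
  have hlog : 4 < Real.log t := log_gt_four ht
  have hlog0 : 0 < Real.log t := by linarith
  set L := Real.log t with hLdef
  have hden : 0 < t * L^2 := by positivity
  set f : ℝ → ℝ := fun ω =>
    ((t^2 / 2 + ω + 1) / (((Real.log (t^2 / 2 + ω))^2 + π^2) * (t^2 / 2 + ω) ^ ((3:ℝ)/2)))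
      * Real.exp (-ω) with hfdef
  -- rewriting the rpow
  have hrpow : ∀ ω : ℝ, 0 < ω →
      (t^2/2 + ω) ^ ((3:ℝ)/2) = (t^2/2 + ω) * Real.sqrt (t^2/2 + ω) := by
    intro ω hω
    have hx0 : (0:ℝ) < t^2/2 + ω := by positivity
    rw [show (3:ℝ)/2 = 1 + 1/2 by norm_num, Real.rpow_add hx0, Real.rpow_one,
      ← Real.sqrt_eq_rpow]
  -- nonnegativity
  have hnonneg : ∀ ω : ℝ, 0 < ω → 0 ≤ f ω := by
    intro ω hω
    apply mul_nonneg _ (Real.exp_nonneg _)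
    apply div_nonneg (by nlinarith)
    apply mul_nonneg (by positivity)
    exact Real.rpow_nonneg (by nlinarith) _
  -- pointwise upper bound
  have hupper : ∀ ω ∈ Set.Ioi (0:ℝ), f ω ≤ (3 / (t * L^2)) * Real.exp (-ω) := by
    intro ω hω
    simp only [Set.mem_Ioi] at hω
    have hx0 : (0:ℝ) < t^2/2 + ω := by positivity
    have hx1 : (1:ℝ) ≤ t^2/2 + ω := by nlinarith [sq_nonneg (t-60)]
    have hsq' : (2*t/3)^2 ≤ t^2/2 + ω := by nlinarith
    have hxt : t ≤ t^2/2 + ω := by nlinarith [sq_nonneg (t-2)]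
    set x := t^2/2 + ω with hxdef
    have hsq : (2*t/3) ≤ Real.sqrt x := by
      rw [Real.le_sqrt (by positivity) (by linarith)]
      exact hsq'
    have hLx : L ≤ Real.log x := Real.log_le_log ht0 hxt
    have hLx0 : 0 < Real.log x := lt_of_lt_of_le hlog0 hLx
    show (x + 1) / (((Real.log x)^2 + π^2) * x ^ ((3:ℝ)/2)) * Real.exp (-ω)
      ≤ (3 / (t * L^2)) * Real.exp (-ω)
    rw [hrpow ω hω]
    have hdpos : 0 < L^2 * (x * (2*t/3)) := by positivity
    have key : (x + 1) / (((Real.log x)^2 + π^2) * (x * Real.sqrt x))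
        ≤ (2*x) / (L^2 * (x * (2*t/3))) := by
      apply div_le_div₀ (by positivity) (by linarith) hdpos
      have h1 : L^2 ≤ (Real.log x)^2 + π^2 := by nlinarith [sq_nonneg π]
      have h2 : x * (2*t/3) ≤ x * Real.sqrt x :=
        mul_le_mul_of_nonneg_left hsq (by linarith)
      calc L^2 * (x * (2*t/3)) ≤ ((Real.log x)^2 + π^2) * (x * (2*t/3)) :=
            mul_le_mul_of_nonneg_right h1 (by positivity)
        _ ≤ ((Real.log x)^2 + π^2) * (x * Real.sqrt x) :=
            mul_le_mul_of_nonneg_left h2 (by positivity)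
    have heq : (2*x) / (L^2 * (x * (2*t/3))) = 3 / (t * L^2) := by
      field_simp
    rw [heq] at key
    exact mul_le_mul_of_nonneg_right key (Real.exp_nonneg _)
  -- pointwise lower bound on Ioc 0 1
  have hlower : ∀ ω ∈ Set.Ioc (0:ℝ) 1,
      Real.exp (-1) / 5 / (t * L^2) ≤ f ω := by
    intro ω hω
    obtain ⟨hω0, hω1⟩ := hω
    have hx0 : (0:ℝ) < t^2/2 + ω := by positivity
    have hx1 : (1:ℝ) ≤ t^2/2 + ω := by nlinarith [sq_nonneg (t-60)]
    have hxle' : t^2/2 + ω ≤ t^2 := by nlinarith [sq_nonneg (t-2)]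
    set x := t^2/2 + ω with hxdef
    have hxle : x ≤ t^2 := hxle'
    have hLx0 : 0 ≤ Real.log x := Real.log_nonneg hx1
    have hLxle : Real.log x ≤ 2 * L := by
      calc Real.log x ≤ Real.log (t^2) := Real.log_le_log hx0 hxle
        _ = 2 * L := by rw [hLdef, Real.log_pow]; push_cast; ring
    have hsqle : Real.sqrt x ≤ t := by
      rw [show t = Real.sqrt (t^2) by rw [Real.sqrt_sq ht0.le]]
      exact Real.sqrt_le_sqrt hxle
    have hpi : π^2 ≤ L^2 := by
      have := Real.pi_lt_d2
      have := Real.pi_pos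
      nlinarith
    show Real.exp (-1) / 5 / (t * L^2)
      ≤ (x + 1) / (((Real.log x)^2 + π^2) * x ^ ((3:ℝ)/2)) * Real.exp (-ω)
    rw [hrpow ω hω0]
    have hDpos : 0 < ((Real.log x)^2 + π^2) * (x * Real.sqrt x) := by
      have := Real.pi_pos
      have hs : 0 < Real.sqrt x := Real.sqrt_pos.mpr hx0
      positivity
    have key : x / (5 * L^2 * (x * t))
        ≤ (x + 1) / (((Real.log x)^2 + π^2) * (x * Real.sqrt x)) := by
      apply div_le_div₀ (by linarith) (by linarith) hDpos
      have h1 : (Real.log x)^2 + π^2 ≤ 5 * L^2 := by nlinarith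
      have h2 : x * Real.sqrt x ≤ x * t :=
        mul_le_mul_of_nonneg_left hsqle (by linarith)
      calc ((Real.log x)^2 + π^2) * (x * Real.sqrt x)
          ≤ (5 * L^2) * (x * Real.sqrt x) := by
            apply mul_le_mul_of_nonneg_right h1
            have hs : 0 ≤ Real.sqrt x := Real.sqrt_nonneg _
            positivity
        _ ≤ (5 * L^2) * (x * t) := mul_le_mul_of_nonneg_left h2 (by positivity)
    have heq : x / (5 * L^2 * (x * t)) = 1 / 5 / (t * L^2) := by
      field_simp
    rw [heq] at key
    have hexp : Real.exp (-1) ≤ Real.exp (-ω) := Real.exp_le_exp.mpr (by linarith)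
    calc Real.exp (-1) / 5 / (t * L^2)
        = (1 / 5 / (t * L^2)) * Real.exp (-1) := by ring
      _ ≤ ((x + 1) / (((Real.log x)^2 + π^2) * (x * Real.sqrt x))) * Real.exp (-ω) := by
          apply mul_le_mul key hexp (Real.exp_nonneg _)
          positivity
  -- measurability
  have hmeas : Measurable f := by
    apply Measurable.mul _ (by fun_prop)
    apply Measurable.div (by fun_prop)
    apply Measurable.mul
    · exact ((Real.measurable_log.comp (by fun_prop)).pow_const 2).add measurable_const
    · exact (Real.continuous_rpow_const (by norm_num : (0:ℝ) ≤ 3/2)).measurable.comp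
        (by fun_prop)
  -- integrability
  have hgint : IntegrableOn (fun ω : ℝ => Real.exp (-ω)) (Set.Ioi 0) := by
    simpa using exp_neg_integrableOn_Ioi 0 one_pos
  have hfint : IntegrableOn f (Set.Ioi 0) := by
    apply Integrable.mono' (hgint.const_mul (3 / (t * L^2)))
      hmeas.aestronglyMeasurable.restrict
    filter_upwards [ae_restrict_mem measurableSet_Ioi] with ω hω
    rw [Real.norm_eq_abs, abs_of_nonneg (hnonneg ω hω)]
    exact hupper ω hω
  constructor
  · -- lower bound
    have h1 : IntegrableOn f (Set.Ioc 0 1) := hfint.mono_set Set.Ioc_subset_Ioi_self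
    have h2 : Real.exp (-1) / 5 / (t * L^2) ≤ ∫ ω in Set.Ioc (0:ℝ) 1, f ω := by
      have := setIntegral_mono_on (integrableOn_const (μ := volume) (s := Set.Ioc (0:ℝ) 1)
        (C := Real.exp (-1) / 5 / (t * L^2)) (by simp))
        h1 measurableSet_Ioc hlower
      simpa using this
    have h3 : (∫ ω in Set.Ioc (0:ℝ) 1, f ω) ≤ ∫ ω in Set.Ioi (0:ℝ), f ω := by
      apply setIntegral_mono_set hfint
      · filter_upwards [ae_restrict_mem measurableSet_Ioi] with ω hω
        exact hnonneg ω hω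
      · exact (Set.Ioc_subset_Ioi_self).eventuallyLE
    exact le_trans h2 h3
  · -- upper bound
    have h2 : (∫ ω in Set.Ioi (0:ℝ), f ω)
        ≤ ∫ ω in Set.Ioi (0:ℝ), (3 / (t * L^2)) * Real.exp (-ω) :=
      setIntegral_mono_on hfint (hgint.const_mul _) measurableSet_Ioi hupper
    have h3 : (∫ ω in Set.Ioi (0:ℝ), (3 / (t * L^2)) * Real.exp (-ω))
        = 3 / (t * L^2) := by
      rw [integral_const_mul, integral_exp_neg_Ioi_zero, mul_one]
    rw [h3] at h2
    exact h2

/-- The HTHS marginal of φ has tails of order 1/(|φ| (log |φ|)²). -/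
theorem hths_phi_tail :
    ∃ c C M : ℝ, 0 < c ∧ 0 < C ∧ 0 < M ∧ ∀ φ : ℝ, M < |φ| →
      c ≤ |φ| * (Real.log |φ|)^2 * hthsPhiKernel φ ∧
      |φ| * (Real.log |φ|)^2 * hthsPhiKernel φ ≤ C := by
  refine ⟨Real.exp (-1) / 5, 3, 60, by positivity, by norm_num, by norm_num, ?_⟩
  intro φ hφ
  set t := |φ| with htdef
  have ht : 60 < t := hφ
  have ht0 : (0:ℝ) < t := by linarith
  have hlog0 : 0 < Real.log t := by have := log_gt_four ht; linarith
  have hden : 0 < t * (Real.log t)^2 := by positivity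
  obtain ⟨hl, hu⟩ := kernel_bounds ht
  rw [hths_abs φ, ← htdef]
  constructor
  · calc Real.exp (-1) / 5
        = Real.exp (-1) / 5 / (t * (Real.log t)^2) * (t * (Real.log t)^2) :=
          (div_mul_cancel₀ _ hden.ne').symm
      _ ≤ hthsPhiKernel t * (t * (Real.log t)^2) :=
          mul_le_mul_of_nonneg_right hl hden.le
      _ = t * (Real.log t)^2 * hthsPhiKernel t := mul_comm _ _
  · calc t * (Real.log t)^2 * hthsPhiKernel t
        ≤ t * (Real.log t)^2 * (3 / (t * (Real.log t)^2)) :=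
          mul_le_mul_of_nonneg_left hu hden.le
      _ = 3 := by rw [mul_comm, div_mul_cancel₀ _ hden.ne']
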